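/- arXiv:math/0508372 — 2 statements merged into one kernel-verified Lean document; each statement's English description precedes it below -/
import Mathlib

section
/- Fix p : ℤ and assume the Laplacian Δ is surjective in degrees p+1 and p+2 (i.e. Δ (p+1) and Δ (p+2) are surjective). Suppose W is a subspace of V p with W ⊆ ker (d p) ∩ ker (δ p) and with ker (δ p) = W ⊕ range (δ (p+1)) as an internal direct sum. Then the p-th cohomology of the subcomplex of harmonic elements with differential δ, namely the quotient (ker (δ p) ∩ ker (Δ p)) / (image under δ (p+1) of ker (Δ (p+1))), is linearly isomorphic to the product W × (ker (δ (p+1)) / range (δ (p+2))). (This is the abstract form of Remark 1: the δ-cohomology of harmonic forms in degree p is the relative cohomology in degree p plus an echo of the relative cohomology in degree p+1.) -/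
/-- Transport along an equality of indices, as a linear map (the identity map). -/
def lcast (V : ℤ → Type*) [∀ p, AddCommGroup (V p)] [∀ p, Module ℝ (V p)]
    {p q : ℤ} (h : p = q) : V p →ₗ[ℝ] V q := by
  subst h; exact LinearMap.id

/-- The differential `d (p-1)`, regarded as a linear map into `V p`. -/
def dTo (V : ℤ → Type*) [∀ p, AddCommGroup (V p)] [∀ p, Module ℝ (V p)]
    (d : ∀ p : ℤ, V p →ₗ[ℝ] V (p + 1)) (p : ℤ) : V (p - 1) →ₗ[ℝ] V p :=
  (lcast V (by omega)).comp (d (p - 1))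

/-- The codifferential `δ (p+1)`, regarded as a linear map into `V p`. -/
def deltaTo (V : ℤ → Type*) [∀ p, AddCommGroup (V p)] [∀ p, Module ℝ (V p)]
    (δ : ∀ p : ℤ, V p →ₗ[ℝ] V (p - 1)) (p : ℤ) : V (p + 1) →ₗ[ℝ] V p :=
  (lcast V (by omega)).comp (δ (p + 1))

/-- The Laplacian `Δ p = d (p-1) ∘ δ p + δ (p+1) ∘ d p : V p →ₗ[ℝ] V p`. -/
def Lap (V : ℤ → Type*) [∀ p, AddCommGroup (V p)] [∀ p, Module ℝ (V p)]
    (d : ∀ p : ℤ, V p →ₗ[ℝ] V (p + 1)) (δ : ∀ p : ℤ, V p →ₗ[ℝ] V (p - 1))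
    (p : ℤ) : V p →ₗ[ℝ] V p :=
  ((dTo V d p).comp (δ p)) + ((deltaTo V δ p).comp (d p))

/-!
For a co-closed `x`, `Δ x = δ d x`, so `x ↦ (π_W x, [d x])` maps the co-closed harmonic elements
to `W × H^{p+1}_δ`, where `π_W` is the projection along `range δ` given by the splitting of
`ker δ`. Surjectivity: for `w ∈ W` and `c ∈ ker δ`, solve `Δ y = c`; then `x = w + δ y` has
`d x = c - δ d y`. Kernel: if `x = δ y` and `d δ y = δ z`, then `Δ y = δ (z + d y)`; solving
`Δ n = z + d y` and using `δ Δ = Δ δ`, the element `y - δ n` is harmonic with `δ (y - δ n) = x`.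
-/

open LinearMap Submodule

theorem Submodule.exists_projection_of_disjoint {K E : Type*} [DivisionRing K] [AddCommGroup E]
    [Module K E] {p q : Submodule K E} (h : Disjoint p q) :
    ∃ π : E →ₗ[K] p, (∀ x : p, π x = x) ∧ q ≤ ker π := by
  obtain ⟨r, hqr, hr⟩ := h.symm.exists_isCompl
  exact ⟨p.projectionOnto r hr.symm, projectionOnto_apply_left hr.symm,
    (ker_projectionOnto hr.symm).symm ▸ hqr⟩

theorem Submodule.mem_of_mem_sup_of_projection_eq_zero {R E : Type*} [Ring R] [AddCommGroup E]
    [Module R E] {p q : Submodule R E} {π : E →ₗ[R] p} (hπ : ∀ x : p, π x = x)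
    (hq : q ≤ ker π) {x : E} (hx : x ∈ p ⊔ q) (h0 : π x = 0) : x ∈ q := by
  obtain ⟨y, hy, z, hz, rfl⟩ := mem_sup.mp hx
  have hy0 : y = 0 := by
    simpa [hπ ⟨y, hy⟩, mem_ker.mp (hq hz)] using congrArg Subtype.val h0
  rwa [hy0, zero_add]

section Laplacian

variable {V : ℤ → Type*} [∀ p, AddCommGroup (V p)] [∀ p, Module ℝ (V p)]
  {d : ∀ p : ℤ, V p →ₗ[ℝ] V (p + 1)} {δ : ∀ p : ℤ, V p →ₗ[ℝ] V (p - 1)}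

theorem lcast_eq_zero_iff {a b : ℤ} (h : a = b) {x : V a} : lcast V h x = 0 ↔ x = 0 := by
  subst h; rfl

theorem d_lcast {a b : ℤ} (h : a = b) (x : V a) :
    d b (lcast V h x) = lcast V (by rw [h]) (d a x) := by
  subst h; rfl

theorem delta_lcast {a b : ℤ} (h : a = b) (x : V a) :
    δ b (lcast V h x) = lcast V (by rw [h]) (δ a x) := by
  subst h; rfl

theorem deltaTo_eq_zero_iff (q : ℤ) {y : V (q + 1)} : deltaTo V δ q y = 0 ↔ δ (q + 1) y = 0 :=
  lcast_eq_zero_iff _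

theorem delta_deltaTo (hδ : ∀ p : ℤ, (δ (p - 1)).comp (δ p) = 0) (q : ℤ) (y : V (q + 1)) :
    δ q (deltaTo V δ q y) = 0 := by
  rw [deltaTo, comp_apply, delta_lcast, ← comp_apply (δ _), hδ, LinearMap.zero_apply, map_zero]

theorem deltaTo_deltaTo (hδ : ∀ p : ℤ, (δ (p - 1)).comp (δ p) = 0) (q : ℤ) (y : V (q + 1 + 1)) :
    deltaTo V δ q (deltaTo V δ (q + 1) y) = 0 :=
  (deltaTo_eq_zero_iff q).mpr (delta_deltaTo hδ (q + 1) y)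

theorem lap_succ_apply (q : ℤ) (y : V (q + 1)) :
    Lap V d δ (q + 1) y = d q (deltaTo V δ q y) + deltaTo V δ (q + 1) (d (q + 1) y) := by
  simp only [Lap, dTo, deltaTo, LinearMap.add_apply, comp_apply, d_lcast]

theorem lap_of_delta_eq_zero {q : ℤ} {x : V q} (hx : δ q x = 0) :
    Lap V d δ q x = deltaTo V δ q (d q x) := by
  simp only [Lap, LinearMap.add_apply, comp_apply, hx, map_zero, zero_add]

theorem deltaTo_lap (hδ : ∀ p : ℤ, (δ (p - 1)).comp (δ p) = 0) (q : ℤ) (y : V (q + 1)) :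
    deltaTo V δ q (Lap V d δ (q + 1) y) = Lap V d δ q (deltaTo V δ q y) := by
  rw [lap_succ_apply, map_add, deltaTo_deltaTo hδ, add_zero,
    lap_of_delta_eq_zero (delta_deltaTo hδ q y)]

variable (V d δ) in
abbrev harmonicCoclosed (q : ℤ) : Submodule ℝ (V q) :=
  ker (δ q) ⊓ ker (Lap V d δ q)

variable (V δ) in
abbrev deltaCohomology (q : ℤ) : Type _ :=
  ker (δ q) ⧸ (range (deltaTo V δ q)).comap (ker (δ q)).subtype

theorem mem_harmonicCoclosed_iff {q : ℤ} {x : V q} :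
    x ∈ harmonicCoclosed V d δ q ↔ δ q x = 0 ∧ δ (q + 1) (d q x) = 0 := by
  simp only [mem_inf, mem_ker]
  exact and_congr_right fun hx ↦ by rw [lap_of_delta_eq_zero hx, deltaTo_eq_zero_iff]

theorem d_mem_ker_of_mem_harmonicCoclosed {q : ℤ} {x : V q} (hx : x ∈ harmonicCoclosed V d δ q) :
    d q x ∈ ker (δ (q + 1)) :=
  (mem_harmonicCoclosed_iff.mp hx).2

variable (d δ) in
noncomputable def harmonicToProd (p : ℤ) {W : Submodule ℝ (V p)} (π : V p →ₗ[ℝ] W) :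
    harmonicCoclosed V d δ p →ₗ[ℝ] W × deltaCohomology V δ (p + 1) :=
  (π ∘ₗ Submodule.subtype _).prod <| mkQ _ ∘ₗ
    codRestrict _ (d p ∘ₗ Submodule.subtype _) fun x ↦ d_mem_ker_of_mem_harmonicCoclosed x.2

variable {p : ℤ} {W : Submodule ℝ (V p)}

theorem harmonicToProd_apply (π : V p →ₗ[ℝ] W) (x : harmonicCoclosed V d δ p) :
    harmonicToProd d δ p π x =
      (π x, Submodule.Quotient.mk ⟨d p x, d_mem_ker_of_mem_harmonicCoclosed x.2⟩) :=
  rfl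

theorem harmonicToProd_surjective (hδ : ∀ p : ℤ, (δ (p - 1)).comp (δ p) = 0)
    (hΔ : Function.Surjective (Lap V d δ (p + 1))) (hW : W ≤ ker (d p) ⊓ ker (δ p))
    {π : V p →ₗ[ℝ] W} (hπ : ∀ w : W, π w = w) (hπδ : range (deltaTo V δ p) ≤ ker π) :
    Function.Surjective (harmonicToProd d δ p π) := by
  rintro ⟨w, c⟩
  obtain ⟨⟨c, hc⟩, rfl⟩ := Submodule.Quotient.mk_surjective _ c
  obtain ⟨y, hy⟩ := hΔ c
  obtain ⟨hdw, hδw⟩ := mem_inf.mp (hW w.2)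
  have hdx : d p (w + deltaTo V δ p y) = c - deltaTo V δ (p + 1) (d (p + 1) y) := by
    rw [map_add, mem_ker.mp hdw, zero_add, ← hy, lap_succ_apply, add_sub_cancel_right]
  have hx : (w : V p) + deltaTo V δ p y ∈ harmonicCoclosed V d δ p := by
    rw [mem_harmonicCoclosed_iff, hdx, map_add, map_sub, delta_deltaTo hδ, delta_deltaTo hδ,
      mem_ker.mp hδw, mem_ker.mp hc]
    simp
  refine ⟨⟨_, hx⟩, Prod.ext ?_ ?_⟩
  · simp [harmonicToProd_apply, hπ, mem_ker.mp (hπδ (mem_range_self _ y))]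
  · refine (Submodule.Quotient.eq _).mpr ⟨-d (p + 1) y, ?_⟩
    simp [hdx]

theorem ker_harmonicToProd (hδ : ∀ p : ℤ, (δ (p - 1)).comp (δ p) = 0)
    (hΔ : Function.Surjective (Lap V d δ (p + 1 + 1))) {π : V p →ₗ[ℝ] W}
    (hπ : ∀ w : W, π w = w) (hπδ : range (deltaTo V δ p) ≤ ker π)
    (hWδ : W ⊔ range (deltaTo V δ p) = ker (δ p)) :
    ker (harmonicToProd d δ p π) =
      (map (deltaTo V δ p) (ker (Lap V d δ (p + 1)))).comap (Submodule.subtype _) := by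
  ext ⟨x, hx⟩
  simp only [mem_ker, harmonicToProd_apply, Prod.mk_eq_zero, Submodule.Quotient.mk_eq_zero,
    mem_comap, Submodule.coe_subtype, mem_map, mem_range]
  constructor
  · rintro ⟨hπx, z, hz⟩
    obtain ⟨y, rfl⟩ : x ∈ range (deltaTo V δ p) :=
      mem_of_mem_sup_of_projection_eq_zero hπ hπδ (hWδ ▸ (mem_inf.mp hx).1) hπx
    obtain ⟨n, hn⟩ := hΔ (z + d (p + 1) y)
    refine ⟨y - deltaTo V δ (p + 1) n, ?_, by rw [map_sub, deltaTo_deltaTo hδ, sub_zero]⟩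
    rw [map_sub, lap_succ_apply, ← hz, ← map_add, ← hn, deltaTo_lap hδ, sub_self]
  · rintro ⟨y, hy, rfl⟩
    refine ⟨hπδ (mem_range_self _ y), -d (p + 1) y, ?_⟩
    rw [lap_succ_apply, add_eq_zero_iff_eq_neg'] at hy
    rw [map_neg, hy, neg_neg]

end Laplacian

theorem harmonic_delta_cohomology_iso_general
    (V : ℤ → Type*) [∀ p, AddCommGroup (V p)] [∀ p, Module ℝ (V p)]
    (d : ∀ p : ℤ, V p →ₗ[ℝ] V (p + 1)) (δ : ∀ p : ℤ, V p →ₗ[ℝ] V (p - 1))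
    (hδ : ∀ p : ℤ, (δ (p - 1)).comp (δ p) = 0)
    (p : ℤ)
    (hΔ1 : Function.Surjective (Lap V d δ (p + 1)))
    (hΔ2 : Function.Surjective (Lap V d δ (p + 2)))
    (W : Submodule ℝ (V p))
    (hW : W ≤ LinearMap.ker (d p) ⊓ LinearMap.ker (δ p))
    (hWdisj : W ⊓ LinearMap.range (deltaTo V δ p) = ⊥)
    (hWspan : W ⊔ LinearMap.range (deltaTo V δ p) = LinearMap.ker (δ p)) :
    Nonempty (
      ((↥(LinearMap.ker (δ p) ⊓ LinearMap.ker (Lap V d δ p)) ⧸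
          (Submodule.comap
            (LinearMap.ker (δ p) ⊓ LinearMap.ker (Lap V d δ p)).subtype
            (Submodule.map (deltaTo V δ p) (LinearMap.ker (Lap V d δ (p + 1))))))
        ≃ₗ[ℝ]
      (W × (↥(LinearMap.ker (δ (p + 1))) ⧸
          (Submodule.comap (LinearMap.ker (δ (p + 1))).subtype
            (LinearMap.range (deltaTo V δ (p + 1)))))))) := by
  obtain ⟨π, hπ, hπδ⟩ := exists_projection_of_disjoint (disjoint_iff.mpr hWdisj)
  have hΔ2' : Function.Surjective (Lap V d δ (p + 1 + 1)) := by
    rwa [show p + 1 + 1 = p + 2 by ring]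
  exact ⟨(quotEquivOfEq _ _ (ker_harmonicToProd hδ hΔ2' hπ hπδ hWspan).symm).trans
    ((harmonicToProd d δ p π).quotKerEquivOfSurjective
      (harmonicToProd_surjective hδ hΔ1 hW hπ hπδ))⟩

/-- **Remark 1 (abstract form).**  If the Laplacian is surjective in degrees `p+1` and
`p+2`, and `W ⊆ ker (d p) ∩ ker (δ p)` is a subspace with `ker (δ p) = W ⊕ range (δ (p+1))`,
then the `p`-th cohomology of the complex of harmonic elements with differential `δ`,
`(ker (δ p) ∩ ker (Δ p)) / δ (p+1) (ker (Δ (p+1)))`, is linearly isomorphic to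
`W × (ker (δ (p+1)) / range (δ (p+2)))`. -/
theorem harmonic_delta_cohomology_iso
    (V : ℤ → Type*) [∀ p, AddCommGroup (V p)] [∀ p, Module ℝ (V p)]
    (d : ∀ p : ℤ, V p →ₗ[ℝ] V (p + 1)) (δ : ∀ p : ℤ, V p →ₗ[ℝ] V (p - 1))
    (hd : ∀ p : ℤ, (d (p + 1)).comp (d p) = 0)
    (hδ : ∀ p : ℤ, (δ (p - 1)).comp (δ p) = 0)
    (p : ℤ)
    (hΔ1 : Function.Surjective (Lap V d δ (p + 1)))
    (hΔ2 : Function.Surjective (Lap V d δ (p + 2)))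
    (W : Submodule ℝ (V p))
    (hW : W ≤ LinearMap.ker (d p) ⊓ LinearMap.ker (δ p))
    (hWdisj : W ⊓ LinearMap.range (deltaTo V δ p) = ⊥)
    (hWspan : W ⊔ LinearMap.range (deltaTo V δ p) = LinearMap.ker (δ p)) :
    Nonempty (
      ((↥(LinearMap.ker (δ p) ⊓ LinearMap.ker (Lap V d δ p)) ⧸
          (Submodule.comap
            (LinearMap.ker (δ p) ⊓ LinearMap.ker (Lap V d δ p)).subtype
            (Submodule.map (deltaTo V δ p) (LinearMap.ker (Lap V d δ (p + 1))))))
        ≃ₗ[ℝ]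
      (W × (↥(LinearMap.ker (δ (p + 1))) ⧸
          (Submodule.comap (LinearMap.ker (δ (p + 1))).subtype
            (LinearMap.range (deltaTo V δ (p + 1)))))))) :=
  harmonic_delta_cohomology_iso_general V d δ hδ p hΔ1 hΔ2 W hW hWdisj hWspan
end

section
/- Fix p : ℤ and assume Δ (p−1) : V (p−1) → V (p−1) is surjective. Then for every α ∈ ker (d (p−1)) (every closed (p−1)-element) there exists φ ∈ range (d (p−1)) ∩ ker (Δ p) (an exact harmonic p-element) such that δ p φ − α ∈ range (d (p−2)) (δ φ and α differ by an exact element). (Surjectivity step in the proof of Lemma 3.) -/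
/-! Pick `β` with `Δ β = α` and put `φ = d β`. Then `δ φ = Δ β - d δ β = α - d δ β`,
so `δ φ - α` is exact, and `Δ φ = d δ φ + δ d d β = d α - d d δ β = 0` because `α` is
closed. -/

section Complex

variable (V : ℤ → Type*) [∀ p, AddCommGroup (V p)] [∀ p, Module ℝ (V p)]
  (d : ∀ p : ℤ, V p →ₗ[ℝ] V (p + 1)) (δ : ∀ p : ℤ, V p →ₗ[ℝ] V (p - 1))

lemma lap_apply (p : ℤ) (x : V p) :
    Lap V d δ p x = dTo V d p (δ p x) + deltaTo V δ p (d p x) :=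
  rfl

variable {V} in
lemma map_lcast {W : ℤ → ℤ} (f : ∀ p : ℤ, V p →ₗ[ℝ] V (W p)) {a b : ℤ} (h : a = b)
    (x : V a) : f b (lcast V h x) = lcast V (congrArg W h) (f a x) := by
  subst h; rfl

variable {d} in
lemma dTo_eq_zero {p : ℤ} {x : V (p - 1)} (hx : d (p - 1) x = 0) : dTo V d p x = 0 := by
  simp [dTo, hx]

lemma d_dTo (hd : ∀ p : ℤ, (d (p + 1)).comp (d p) = 0) (p : ℤ) (x : V (p - 1)) :
    d p (dTo V d p x) = 0 := by
  rw [dTo, LinearMap.comp_apply, map_lcast d (by omega), ← LinearMap.comp_apply (d _), hd,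
    LinearMap.zero_apply, map_zero]

lemma dTo_dTo (hd : ∀ p : ℤ, (d (p + 1)).comp (d p) = 0) (p : ℤ) (x : V (p - 1 - 1)) :
    dTo V d p (dTo V d (p - 1) x) = 0 :=
  dTo_eq_zero V (d_dTo V d hd (p - 1) x)

lemma delta_dTo (p : ℤ) (x : V (p - 1)) :
    δ p (dTo V d p x) = deltaTo V δ (p - 1) (d (p - 1) x) := by
  rw [dTo, LinearMap.comp_apply, map_lcast δ (by omega)]
  rfl

lemma delta_dTo_eq_lap_sub (p : ℤ) (x : V (p - 1)) :
    δ p (dTo V d p x) = Lap V d δ (p - 1) x - dTo V d (p - 1) (δ (p - 1) x) := by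
  rw [delta_dTo, lap_apply, add_sub_cancel_left]

end Complex

theorem delta_surjectivity_step_general
    (V : ℤ → Type*) [∀ p, AddCommGroup (V p)] [∀ p, Module ℝ (V p)]
    (d : ∀ p : ℤ, V p →ₗ[ℝ] V (p + 1)) (δ : ∀ p : ℤ, V p →ₗ[ℝ] V (p - 1))
    (hd : ∀ p : ℤ, (d (p + 1)).comp (d p) = 0)
    (p : ℤ)
    (hΔ : Function.Surjective (Lap V d δ (p - 1))) :
    ∀ α : V (p - 1), α ∈ LinearMap.ker (d (p - 1)) →
      ∃ φ : V p, φ ∈ LinearMap.range (dTo V d p) ⊓ LinearMap.ker (Lap V d δ p) ∧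
        δ p φ - α ∈ LinearMap.range (dTo V d (p - 1)) := by
  intro α hα
  obtain ⟨β, rfl⟩ := hΔ α
  have hδφ := delta_dTo_eq_lap_sub V d δ p β
  refine ⟨dTo V d p β, ⟨⟨β, rfl⟩, ?_⟩, ⟨-δ (p - 1) β, ?_⟩⟩
  · rw [SetLike.mem_coe, LinearMap.mem_ker, lap_apply, hδφ, d_dTo V d hd, map_sub,
      dTo_eq_zero V hα, dTo_dTo V d hd, map_zero, sub_self, add_zero]
  · rw [map_neg, hδφ]
    abel

/-- **Surjectivity step in the proof of Lemma 3.**  Suppose `Δ (p-1)` is surjective.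
Then for every closed `(p-1)`-element `α` there is an exact harmonic `p`-element `φ`
with `δ p φ - α` exact. -/
theorem delta_surjectivity_step
    (V : ℤ → Type*) [∀ p, AddCommGroup (V p)] [∀ p, Module ℝ (V p)]
    (d : ∀ p : ℤ, V p →ₗ[ℝ] V (p + 1)) (δ : ∀ p : ℤ, V p →ₗ[ℝ] V (p - 1))
    (hd : ∀ p : ℤ, (d (p + 1)).comp (d p) = 0)
    (hδ : ∀ p : ℤ, (δ (p - 1)).comp (δ p) = 0)
    (p : ℤ)
    (hΔ : Function.Surjective (Lap V d δ (p - 1))) :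
    ∀ α : V (p - 1), α ∈ LinearMap.ker (d (p - 1)) →
      ∃ φ : V p, φ ∈ LinearMap.range (dTo V d p) ⊓ LinearMap.ker (Lap V d δ p) ∧
        δ p φ - α ∈ LinearMap.range (dTo V d (p - 1)) :=
  delta_surjectivity_step_general V d δ hd p hΔ
end
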